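/- arXiv:2512.18868 — 2 statements merged into one kernel-verified Lean document; each statement's English description precedes it below -/
import Mathlib

section
/- Let $D$ be a Dedekind domain (a Noetherian integrally closed domain of Krull dimension at most 1). Then $D(x)$, the localization of $D[x]$ at the multiplicative set of monic polynomials, is again a Dedekind domain. -/
/-!
`D(x)` is a localization of `D[X]`, a Noetherian integrally closed domain, so it remains to see
that every prime `Q` of `D[X]` containing no monic polynomial has height at most one.
If `Q ∩ D = 0`, then `Q` survives in `K[X]` for `K = Frac D`, a principal ideal domain.
Otherwise `m = Q ∩ D` is maximal and `Q = m[X]`, because every ideal strictly above `m[X]`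
contains a monic polynomial: a nonzero element of `(D/m)[X]` is associate to a monic one, and
monic polynomials lift along `D → D/m`. Finally `ht m[X] = ht m ≤ 1`.
-/

open Polynomial nonZeroDivisors

/-- The multiplicative set of monic polynomials over a commutative ring. -/
def monicSubmonoid (A : Type*) [CommRing A] : Submonoid (Polynomial A) where
  carrier := {f | f.Monic}
  mul_mem' hf hg := hf.mul hg
  one_mem' := Polynomial.monic_one

theorem Ideal.height_le_of_krullDimLE {R : Type*} [CommRing R] {n : ℕ} [Ring.KrullDimLE n R]
    (I : Ideal R) [I.IsPrime] : I.height ≤ n := by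
  have := I.height_le_ringKrullDim_of_isPrime.trans (Ring.krullDimLE_iff.mp ‹_›)
  exact_mod_cast this

namespace Polynomial

theorem exists_monic_mem_of_map_C_lt {R : Type*} [CommRing R] {m : Ideal R} [m.IsMaximal]
    {I : Ideal R[X]} (h : m.map C < I) : ∃ f ∈ I, f.Monic := by
  let := Ideal.Quotient.field m
  let π : R[X] →+* (R ⧸ m)[X] := mapRingHom (Ideal.Quotient.mk m)
  have hker : RingHom.ker π = m.map C := by
    rw [Polynomial.ker_mapRingHom, Ideal.mk_ker]
  obtain ⟨f, hfI, hfm⟩ := SetLike.exists_of_lt h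
  have hf0 : π f ≠ 0 := by rwa [Ne, ← RingHom.mem_ker, hker]
  obtain ⟨c, hc⟩ := Ideal.Quotient.mk_surjective (π f).leadingCoeff⁻¹
  have hmonic : (π (f * C c)).Monic := by
    simpa [π, hc] using monic_mul_leadingCoeff_inv hf0
  obtain ⟨g, hg, -, hgmon⟩ := lifts_and_natDegree_eq_and_monic
    (map_surjective _ Ideal.Quotient.mk_surjective (π (f * C c))) hmonic
  refine ⟨g, ?_, hgmon⟩
  have hdiff : g - f * C c ∈ I := h.le <| hker ▸ by
    rw [RingHom.mem_ker, map_sub, ← hg]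
    exact sub_self _
  simpa using I.add_mem hdiff (I.mul_mem_right (C c) hfI)

variable {D : Type*} [CommRing D] [IsDomain D]

theorem height_le_one_of_under_eq_bot (Q : Ideal D[X]) [Q.IsPrime]
    (hQ : Q.under D = ⊥) : Q.height ≤ 1 := by
  let K := FractionRing D
  let _ : Algebra D[X] K[X] := Polynomial.algebra D K
  have _ : IsLocalization ((D⁰).map C) K[X] := Polynomial.isLocalization D⁰ K
  have hdisj : Disjoint (((D⁰).map C : Submonoid D[X]) : Set D[X]) Q := by
    rw [Set.disjoint_left]
    rintro _ ⟨d, hd, rfl⟩ hdQ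
    have : d ∈ Q.under D := hdQ
    exact nonZeroDivisors.ne_zero hd (by simpa [hQ] using this)
  have _ := IsLocalization.isPrime_of_isPrime_disjoint _ K[X] Q ‹_› hdisj
  rw [← IsLocalization.height_map_of_disjoint (S := K[X]) _ Q hdisj]
  exact Ideal.height_le_of_krullDimLE _

theorem height_le_one_of_forall_not_monic [IsNoetherianRing D] [Ring.KrullDimLE 1 D]
    (Q : Ideal D[X]) [Q.IsPrime] (hQ : ∀ f ∈ Q, ¬ f.Monic) : Q.height ≤ 1 := by
  by_cases hbot : Q.under D = ⊥
  · exact height_le_one_of_under_eq_bot Q hbot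
  have _ : (Q.under D).IsMaximal := Ideal.IsPrime.isMaximal_of_ne_bot inferInstance hbot
  have hQ_eq : (Q.under D).map C = Q := by
    refine Ideal.map_comap_le.eq_of_not_lt fun hlt ↦ ?_
    obtain ⟨f, hfQ, hf⟩ := exists_monic_mem_of_map_C_lt hlt
    exact hQ f hfQ hf
  rw [← hQ_eq, height_map_C]
  exact Ideal.height_le_of_krullDimLE _

end Polynomial

instance monicLocalization_krullDimLE_one {D : Type*} [CommRing D] [IsDomain D]
    [IsNoetherianRing D] [Ring.KrullDimLE 1 D] :
    Ring.KrullDimLE 1 (Localization (monicSubmonoid D)) := by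
  rw [Ring.krullDimLE_iff, ringKrullDim_le_iff_height_le]
  intro P hP
  have hdisj := (IsLocalization.disjoint_under_iff (monicSubmonoid D) _ P).mpr hP.ne_top
  rw [← IsLocalization.height_under (monicSubmonoid D) P]
  exact_mod_cast height_le_one_of_forall_not_monic _ fun f hf hmon ↦
    Set.disjoint_left.mp hdisj hmon hf

/-- If `D` is a Dedekind domain, then `D(x)`, the localization of `D[x]` at the
multiplicative set of monic polynomials, is again a Dedekind domain. -/
theorem monicLocalization_isDedekindDomain (D : Type*) [CommRing D] [IsDedekindDomain D] :
    IsDedekindDomain (Localization (monicSubmonoid D)) := by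
  have hS : monicSubmonoid D ≤ D[X]⁰ := fun f hf ↦ mem_nonZeroDivisors_of_ne_zero hf.ne_zero
  have := IsLocalization.isDomain_localization hS
  have := isIntegrallyClosed_of_isLocalization (Localization (monicSubmonoid D)) _ hS
  have : Ring.DimensionLEOne (Localization (monicSubmonoid D)) :=
    ⟨fun hP0 hP ↦ hP.isMaximal_of_ne_bot hP0⟩
  have : IsDedekindRing (Localization (monicSubmonoid D)) := ⟨⟩
  infer_instance
end

section
/- Let $A$ be a commutative ring, $s \in A$, and let $\widehat{B}$ be the $s$-adic completion of a Noetherian ring $B$. If every maximal ideal of $\widehat{B}$ contains $s$ and $\dim \widehat{B} \le 2$, then the localization $D = \widehat{B}_s$ of $\widehat{B}$ at the element $s$ has Krull dimension at most 1. -/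
/-!
Inverting `t` identifies the primes of `R[1/t]` with the primes of `R` not containing `t`.
Since `t` lies in every maximal ideal, none of these primes is maximal, so every chain of them
extends by one more prime of `R`; hence `dim R[1/t] + 1 ≤ dim R`.
-/

theorem Order.krullDim_add_one_le_of_strictMono {α β : Type*} [Preorder α] [Preorder β]
    {f : α → β} (hf : StrictMono f) (h : ∀ a, ∃ b, f a < b) :
    Order.krullDim α + 1 ≤ Order.krullDim β := by
  cases isEmpty_or_nonempty α with
  | inl _ => simp [Order.krullDim_eq_bot]
  | inr _ =>
    rw [Order.krullDim_eq_iSup_height_of_nonempty, ← WithBot.coe_one, ← WithBot.coe_add,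
      ENat.iSup_add, WithBot.coe_iSup (OrderTop.bddAbove _)]
    refine iSup_le fun a => ?_
    obtain ⟨b, hb⟩ := h a
    calc ((height a + 1 : ℕ∞) : WithBot ℕ∞) ≤ ↑(height (f a) + 1) :=
          WithBot.coe_le_coe.mpr (add_le_add_left (height_le_height_apply_of_strictMono f hf a) 1)
      _ ≤ height b := WithBot.coe_le_coe.mpr (height_add_one_le hb)
      _ ≤ krullDim β := height_le_krullDim b

theorem PrimeSpectrum.comap_algebraMap_away_strictMono {R : Type*} [CommRing R] (t : R) :
    StrictMono (PrimeSpectrum.comap (algebraMap R (Localization.Away t))) :=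
  Monotone.strictMono_of_injective (fun _ _ h => Ideal.comap_mono h)
    (PrimeSpectrum.localization_comap_injective _ (Submonoid.powers t))

theorem ringKrullDim_away_add_one_le {R : Type*} [CommRing R] {t : R}
    (ht : ∀ m : Ideal R, m.IsMaximal → t ∈ m) :
    ringKrullDim (Localization.Away t) + 1 ≤ ringKrullDim R := by
  refine Order.krullDim_add_one_le_of_strictMono
    (PrimeSpectrum.comap_algebraMap_away_strictMono t) fun q => ?_
  set p := PrimeSpectrum.comap (algebraMap R (Localization.Away t)) q
  have hp : t ∉ p.asIdeal :=
    (PrimeSpectrum.localization_away_comap_range _ t).subset (Set.mem_range_self q)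
  obtain ⟨m, hm, hle⟩ := p.asIdeal.exists_le_maximal p.isPrime.ne_top
  exact ⟨⟨m, hm.isPrime⟩, lt_of_le_of_ne hle fun h => hp (h ▸ ht m hm)⟩

theorem krullDim_localization_completion_le_one_general (B : Type*) [CommRing B]
    (s : B)
    (hmax : ∀ m : Ideal (AdicCompletion (Ideal.span ({s} : Set B)) B), m.IsMaximal →
      algebraMap B (AdicCompletion (Ideal.span ({s} : Set B)) B) s ∈ m)
    (hdim : ringKrullDim (AdicCompletion (Ideal.span ({s} : Set B)) B) ≤ 2) :
    ringKrullDim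
      (Localization.Away
        (algebraMap B (AdicCompletion (Ideal.span ({s} : Set B)) B) s)) ≤ 1 :=
  ENat.WithBot.add_le_add_natCast_right_iff.mp ((ringKrullDim_away_add_one_le hmax).trans hdim)

/-- Let `B` be a Noetherian ring, `s ∈ B`, and let `B̂` be the `s`-adic completion of `B`.
If every maximal ideal of `B̂` contains (the image of) `s` and `dim B̂ ≤ 2`, then the
localization `D = B̂_s` has Krull dimension at most `1`. -/
theorem krullDim_localization_completion_le_one (B : Type*) [CommRing B]
    [IsNoetherianRing B] (s : B)
    (hmax : ∀ m : Ideal (AdicCompletion (Ideal.span ({s} : Set B)) B), m.IsMaximal →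
      algebraMap B (AdicCompletion (Ideal.span ({s} : Set B)) B) s ∈ m)
    (hdim : ringKrullDim (AdicCompletion (Ideal.span ({s} : Set B)) B) ≤ 2) :
    ringKrullDim
      (Localization.Away
        (algebraMap B (AdicCompletion (Ideal.span ({s} : Set B)) B) s)) ≤ 1 :=
  krullDim_localization_completion_le_one_general B s hmax hdim
end
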